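/- arXiv:2309.05190 — 4 statements merged into one kernel-verified Lean document; each statement's English description precedes it below -/
import Mathlib

section
/- Let k > 1 be an integer and λ* = (ln 2)/k. Then κλ* = (k+1)(ln 2)/2 > 1. Consequently, for every positive integer n with n ≤ ⌊(k+1)(ln 2)/2⌋, the Poisson distribution of order k with parameter λ = n/κ (i.e. with mean n) has median ν_k(n/κ) = 0; in particular the median is zero when κλ = 1. -/
open scoped BigOperators

/-- The pmf of the Poisson distribution of order `k` with parameter `lam`:
`f_k(n;λ) = e^{-kλ} Σ_{n₁+2n₂+⋯+k n_k = n} λ^{n₁+⋯+n_k}/(n₁!⋯n_k!)`. -/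
noncomputable def poissonOrderKPmf (k : ℕ) (lam : ℝ) (n : ℕ) : ℝ :=
  Real.exp (-(k * lam)) *
    ∑' v : Fin k → ℕ,
      if (∑ i : Fin k, ((i : ℕ) + 1) * v i) = n then
        lam ^ (∑ i : Fin k, v i) / ((∏ i : Fin k, Nat.factorial (v i) : ℕ) : ℝ)
      else 0

/-- The median of the Poisson distribution of order `k` with parameter `lam`:
the least integer `n` such that `P(X ≤ n) ≥ 1/2`. -/
noncomputable def poissonOrderKMedian (k : ℕ) (lam : ℝ) : ℕ :=
  sInf {n : ℕ | (1 : ℝ) / 2 ≤ ∑ j ∈ Finset.range (n + 1), poissonOrderKPmf k lam j}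

lemma pmf_zero (k : ℕ) (lam : ℝ) :
    poissonOrderKPmf k lam 0 = Real.exp (-(k * lam)) := by
  unfold poissonOrderKPmf
  rw [tsum_eq_single (0 : Fin k → ℕ)]
  · simp
  · intro v hv
    rw [if_neg]
    intro h
    apply hv
    funext i
    have := (Finset.sum_eq_zero_iff.mp h) i (Finset.mem_univ i)
    simpa using this

lemma med_zero (k : ℕ) (lam : ℝ) (h : (k : ℝ) * lam ≤ Real.log 2) :
    poissonOrderKMedian k lam = 0 := by
  unfold poissonOrderKMedian
  rw [Nat.sInf_eq_zero]
  left
  show (1 : ℝ) / 2 ≤ ∑ j ∈ Finset.range (0 + 1), poissonOrderKPmf k lam j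
  rw [Finset.sum_range_one, pmf_zero]
  have : Real.exp (-Real.log 2) ≤ Real.exp (-(k * lam)) :=
    Real.exp_le_exp.mpr (by linarith)
  rw [Real.exp_neg, Real.exp_log (by norm_num : (0:ℝ) < 2)] at this
  linarith

/-- For k > 1 and λ* = (ln 2)/k one has κλ* = (k+1)(ln 2)/2 > 1, and for
every positive integer n ≤ ⌊(k+1)(ln 2)/2⌋ the Poisson distribution of order k with
parameter λ = n/κ has median 0; in particular the median is zero when κλ = 1. -/
theorem poissonOrderK_median_zero_small_mean (k : ℕ) (hk : 1 < k) :
    ((k * (k + 1) / 2 : ℕ) : ℝ) * (Real.log 2 / k) = ((k : ℝ) + 1) * Real.log 2 / 2 ∧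
    1 < ((k : ℝ) + 1) * Real.log 2 / 2 ∧
    (∀ n : ℕ, 1 ≤ n → n ≤ ⌊((k : ℝ) + 1) * Real.log 2 / 2⌋₊ →
      poissonOrderKMedian k ((n : ℝ) / ((k * (k + 1) / 2 : ℕ) : ℝ)) = 0) ∧
    poissonOrderKMedian k ((1 : ℝ) / ((k * (k + 1) / 2 : ℕ) : ℝ)) = 0 := by
  have hk0 : (0 : ℝ) < k := by positivity
  have hcast : ((k * (k + 1) / 2 : ℕ) : ℝ) = (k : ℝ) * ((k : ℝ) + 1) / 2 := by
    rw [Nat.cast_div (Nat.even_mul_succ_self k).two_dvd (by norm_num)]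
    push_cast; ring
  have hκpos : (0 : ℝ) < ((k * (k + 1) / 2 : ℕ) : ℝ) := by
    rw [hcast]; positivity
  have hlog : (0.6931471803 : ℝ) < Real.log 2 := Real.log_two_gt_d9
  have hk3 : (3 : ℝ) ≤ (k : ℝ) + 1 := by
    have : (2 : ℕ) ≤ k := hk
    have : (2 : ℝ) ≤ (k : ℝ) := by exact_mod_cast this
    linarith
  have h2 : 1 < ((k : ℝ) + 1) * Real.log 2 / 2 := by nlinarith
  have hmed : ∀ n : ℕ, 1 ≤ n → n ≤ ⌊((k : ℝ) + 1) * Real.log 2 / 2⌋₊ →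
      poissonOrderKMedian k ((n : ℝ) / ((k * (k + 1) / 2 : ℕ) : ℝ)) = 0 := by
    intro n hn1 hn2
    apply med_zero
    have hfl : (n : ℝ) ≤ ((k : ℝ) + 1) * Real.log 2 / 2 := by
      calc (n : ℝ) ≤ (⌊((k : ℝ) + 1) * Real.log 2 / 2⌋₊ : ℝ) := by exact_mod_cast hn2
        _ ≤ _ := Nat.floor_le (by linarith)
    rw [hcast]
    have hkk : (k : ℝ) * ((n : ℝ) / ((k : ℝ) * ((k : ℝ) + 1) / 2)) =
        2 * n / ((k : ℝ) + 1) := by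
      field_simp
    rw [hkk, div_le_iff₀ (by linarith)]
    nlinarith
  refine ⟨?_, h2, hmed, ?_⟩
  · rw [hcast]; field_simp
  · have h1 := hmed 1 le_rfl ?_
    · simpa using h1
    rw [Nat.one_le_iff_ne_zero, ← Nat.pos_iff_ne_zero, Nat.floor_pos]
    linarith
end

section
/- For every integer k ≥ 1 and every real λ > 0, every mode m_k(λ) of the Poisson distribution of order k with parameter λ satisfies the sharp inequalities max{0, ⌊κλ⌋ − κ + 1 − δ_{k,1}} ≤ m_k(λ) ≤ ⌊κλ⌋, where δ_{k,1} is the Kronecker delta (equal to 1 if k = 1 and 0 otherwise). -/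
open scoped BigOperators

/-- unnormalized pmf as a finite sum -/
noncomputable def gK (k : ℕ) (lam : ℝ) (n : ℕ) : ℝ :=
  ∑ v ∈ Fintype.piFinset (fun _ : Fin k => Finset.range (n+1)),
    if (∑ i : Fin k, ((i : ℕ) + 1) * v i) = n then
      lam ^ (∑ i : Fin k, v i) / ((∏ i : Fin k, Nat.factorial (v i) : ℕ) : ℝ)
    else 0

lemma cond_mem {k n : ℕ} {v : Fin k → ℕ} (h : (∑ i : Fin k, ((i : ℕ) + 1) * v i) = n) :
    v ∈ Fintype.piFinset (fun _ : Fin k => Finset.range (n+1)) := by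
  rw [Fintype.mem_piFinset]
  intro i
  rw [Finset.mem_range]
  have h1 : ((i : ℕ) + 1) * v i ≤ n := h ▸ Finset.single_le_sum
    (f := fun j : Fin k => ((j : ℕ) + 1) * v j) (fun j _ => Nat.zero_le _) (Finset.mem_univ i)
  have h2 : v i ≤ ((i : ℕ) + 1) * v i := Nat.le_mul_of_pos_left (v i) (Nat.succ_pos (i : ℕ))
  omega

lemma pmf_eq_gK (k : ℕ) (lam : ℝ) (n : ℕ) :
    poissonOrderKPmf k lam n = Real.exp (-(k * lam)) * gK k lam n := by
  unfold poissonOrderKPmf gK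
  congr 1
  apply tsum_eq_sum
  intro v hv
  rw [if_neg]
  intro hc
  exact hv (cond_mem hc)

lemma gK_nonneg {k : ℕ} {lam : ℝ} (hlam : 0 ≤ lam) (n : ℕ) : 0 ≤ gK k lam n := by
  apply Finset.sum_nonneg
  intro v _
  split
  · positivity
  · exact le_refl 0

lemma gK_zero (k : ℕ) (lam : ℝ) : gK k lam 0 = 1 := by
  unfold gK
  rw [Finset.sum_eq_single_of_mem (0 : Fin k → ℕ)]
  · rw [if_pos (by simp)]
    simp [Nat.factorial]
  · rw [Fintype.mem_piFinset]; intro i; simp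
  · intro b hb hb0
    exfalso
    apply hb0
    funext i
    rw [Fintype.mem_piFinset] at hb
    have := hb i
    simp only [Finset.mem_range, Nat.lt_one_iff] at this
    simpa using this

lemma gK_pos {k : ℕ} (hk : 1 ≤ k) {lam : ℝ} (hlam : 0 < lam) (n : ℕ) : 0 < gK k lam n := by
  unfold gK
  have i0 : Fin k := ⟨0, hk⟩
  set v0 : Fin k → ℕ := fun i => if i = ⟨0, hk⟩ then n else 0 with hv0
  apply Finset.sum_pos' (fun v _ => by positivity)
  refine ⟨v0, ?_, ?_⟩
  · rw [Fintype.mem_piFinset]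
    intro i
    rw [Finset.mem_range]
    simp only [hv0]
    split <;> omega
  · have hsum : (∑ i : Fin k, ((i : ℕ) + 1) * v0 i) = n := by
      rw [Finset.sum_eq_single_of_mem (⟨0, hk⟩ : Fin k) (Finset.mem_univ _)]
      · simp [hv0]
      · intro b _ hb0; simp [hv0, if_neg hb0]
    rw [if_pos hsum]
    positivity

-- generic helper : sum over update
lemma sum_update_erase {k : ℕ} {M : Type*} [AddCommMonoid M] (i : Fin k) (F : Fin k → ℕ → M)
    (w : Fin k → ℕ) (x : ℕ) :
    (∑ j : Fin k, F j (Function.update w i x j))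
      = F i x + ∑ j ∈ Finset.univ.erase i, F j (w j) := by
  rw [← Finset.add_sum_erase _ _ (Finset.mem_univ i)]
  congr 1
  · rw [Function.update_self]
  · apply Finset.sum_congr rfl
    intro j hj
    rw [Function.update_of_ne (Finset.mem_erase.1 hj).1]

lemma prod_update_erase {k : ℕ} {M : Type*} [CommMonoid M] (i : Fin k) (F : Fin k → ℕ → M)
    (w : Fin k → ℕ) (x : ℕ) :
    (∏ j : Fin k, F j (Function.update w i x j))
      = F i x * ∏ j ∈ Finset.univ.erase i, F j (w j) := by
  rw [← Finset.mul_prod_erase _ _ (Finset.mem_univ i)]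
  congr 1
  · rw [Function.update_self]
  · apply Finset.prod_congr rfl
    intro j hj
    rw [Function.update_of_ne (Finset.mem_erase.1 hj).1]

lemma key_sum_ge (k : ℕ) (lam : ℝ) (i : Fin k) (n : ℕ) (h : (i:ℕ)+1 ≤ n) :
    (∑ v ∈ Fintype.piFinset (fun _ : Fin k => Finset.range (n+1)),
      if (∑ j : Fin k, ((j : ℕ) + 1) * v j) = n then
        (v i : ℝ) * lam ^ ((∑ j : Fin k, v j) - 1) / ((∏ j : Fin k, Nat.factorial (v j) : ℕ) : ℝ)
      else 0)
    = gK k lam (n - ((i:ℕ)+1)) := by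
  have step1 : (∑ v ∈ Fintype.piFinset (fun _ : Fin k => Finset.range (n+1)),
      if (∑ j : Fin k, ((j : ℕ) + 1) * v j) = n then
        (v i : ℝ) * lam ^ ((∑ j : Fin k, v j) - 1) / ((∏ j : Fin k, Nat.factorial (v j) : ℕ) : ℝ)
      else 0)
      = ∑ v ∈ (Fintype.piFinset (fun _ : Fin k => Finset.range (n+1))).filter
          (fun v => (∑ j : Fin k, ((j : ℕ) + 1) * v j) = n ∧ 1 ≤ v i),
          (v i : ℝ) * lam ^ ((∑ j : Fin k, v j) - 1)
            / ((∏ j : Fin k, Nat.factorial (v j) : ℕ) : ℝ) := by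
    rw [Finset.sum_filter]
    apply Finset.sum_congr rfl
    intro v _
    by_cases hc : (∑ j : Fin k, ((j : ℕ) + 1) * v j) = n
    · by_cases hvi : 1 ≤ v i
      · rw [if_pos hc, if_pos ⟨hc, hvi⟩]
      · have hz : v i = 0 := by omega
        rw [if_pos hc, if_neg (by tauto), hz]
        simp
    · rw [if_neg hc, if_neg (by tauto)]
  have step2 : gK k lam (n - ((i:ℕ)+1))
      = ∑ w ∈ (Fintype.piFinset (fun _ : Fin k => Finset.range ((n - ((i:ℕ)+1))+1))).filter
          (fun w => (∑ j : Fin k, ((j : ℕ) + 1) * w j) = n - ((i:ℕ)+1)),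
          lam ^ (∑ j : Fin k, w j) / ((∏ j : Fin k, Nat.factorial (w j) : ℕ) : ℝ) := by
    rw [gK, Finset.sum_filter]
  rw [step1, step2]
  refine Finset.sum_bij' (i := fun v (_ : v ∈ _) => Function.update v i (v i - 1))
    (j := fun w (_ : w ∈ _) => Function.update w i (w i + 1)) ?hi ?hj ?li ?ri ?hterm
  case hi =>
    intro v hv
    rw [Finset.mem_filter] at hv
    obtain ⟨-, hc, hvi⟩ := hv
    have hv2 : ((i:ℕ)+1) * v i + ∑ j ∈ Finset.univ.erase i, ((j:ℕ)+1) * v j = n := by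
      have h0 := Finset.add_sum_erase (Finset.univ)
        (fun j : Fin k => ((j:ℕ)+1) * v j) (Finset.mem_univ i)
      simpa using h0.trans hc
    have hcond : (∑ j : Fin k, ((j : ℕ) + 1) * (Function.update v i (v i - 1)) j)
        = n - ((i:ℕ)+1) := by
      rw [sum_update_erase i (fun j x => ((j:ℕ)+1) * x)]
      have hmul : ((i:ℕ)+1) * (v i - 1) + ((i:ℕ)+1) = ((i:ℕ)+1) * v i := by
        rw [← Nat.mul_succ]
        congr 1
        omega
      omega
    rw [Finset.mem_filter]
    exact ⟨cond_mem hcond, hcond⟩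
  case hj =>
    intro w hw
    rw [Finset.mem_filter] at hw
    obtain ⟨-, hc⟩ := hw
    have hw2 : ((i:ℕ)+1) * w i + ∑ j ∈ Finset.univ.erase i, ((j:ℕ)+1) * w j
        = n - ((i:ℕ)+1) := by
      have h0 := Finset.add_sum_erase (Finset.univ)
        (fun j : Fin k => ((j:ℕ)+1) * w j) (Finset.mem_univ i)
      simpa using h0.trans hc
    have hcond : (∑ j : Fin k, ((j : ℕ) + 1) * (Function.update w i (w i + 1)) j) = n := by
      rw [sum_update_erase i (fun j x => ((j:ℕ)+1) * x)]
      have hmul : ((i:ℕ)+1) * (w i + 1) = ((i:ℕ)+1) * w i + ((i:ℕ)+1) := Nat.mul_succ _ _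
      omega
    rw [Finset.mem_filter]
    refine ⟨cond_mem hcond, hcond, ?_⟩
    beta_reduce
    rw [Function.update_self]
    omega
  case li =>
    intro v hv
    rw [Finset.mem_filter] at hv
    obtain ⟨-, -, hvi⟩ := hv
    funext j
    beta_reduce
    by_cases hj : j = i
    · subst hj
      rw [Function.update_self, Function.update_self]
      omega
    · rw [Function.update_of_ne hj, Function.update_of_ne hj]
  case ri =>
    intro w _
    funext j
    beta_reduce
    by_cases hj : j = i
    · subst hj
      rw [Function.update_self, Function.update_self]
      omega
    · rw [Function.update_of_ne hj, Function.update_of_ne hj]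
  case hterm =>
    intro v hv
    rw [Finset.mem_filter] at hv
    obtain ⟨-, hc, hvi⟩ := hv
    have hsum : (∑ j : Fin k, (Function.update v i (v i - 1)) j)
        = (∑ j : Fin k, v j) - 1 := by
      rw [sum_update_erase i (fun _ x => x)]
      have h0 : v i + ∑ j ∈ Finset.univ.erase i, v j = ∑ j : Fin k, v j := by
        have := Finset.add_sum_erase (Finset.univ) (fun j : Fin k => v j) (Finset.mem_univ i)
        simpa using this
      omega
    have hprod : (∏ j : Fin k, Nat.factorial (v j))
        = v i * ∏ j : Fin k, Nat.factorial ((Function.update v i (v i - 1)) j) := by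
      rw [prod_update_erase i (fun _ x => Nat.factorial x)]
      have h0 : (∏ j : Fin k, Nat.factorial (v j))
          = Nat.factorial (v i) * ∏ j ∈ Finset.univ.erase i, Nat.factorial (v j) := by
        have := Finset.mul_prod_erase (Finset.univ)
          (fun j : Fin k => Nat.factorial (v j)) (Finset.mem_univ i)
        simpa using this.symm
      rw [h0, ← mul_assoc]
      congr 1
      exact (Nat.mul_factorial_pred (by omega)).symm
    beta_reduce
    rw [hsum, hprod]
    have hne : ((v i : ℕ) : ℝ) ≠ 0 := Nat.cast_ne_zero.mpr (by omega)
    push_cast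
    rw [mul_div_mul_left _ _ hne]

lemma key_sum_lt (k : ℕ) (lam : ℝ) (i : Fin k) (n : ℕ) (h : n < (i:ℕ)+1) :
    (∑ v ∈ Fintype.piFinset (fun _ : Fin k => Finset.range (n+1)),
      if (∑ j : Fin k, ((j : ℕ) + 1) * v j) = n then
        (v i : ℝ) * lam ^ ((∑ j : Fin k, v j) - 1) / ((∏ j : Fin k, Nat.factorial (v j) : ℕ) : ℝ)
      else 0)
    = 0 := by
  apply Finset.sum_eq_zero
  intro v _
  by_cases hc : (∑ j : Fin k, ((j : ℕ) + 1) * v j) = n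
  · rw [if_pos hc]
    have h1 : ((i : ℕ) + 1) * v i ≤ n := hc ▸ Finset.single_le_sum
      (f := fun j : Fin k => ((j : ℕ) + 1) * v j) (fun j _ => Nat.zero_le _) (Finset.mem_univ i)
    have : v i = 0 := by
      by_contra hne
      have : ((i:ℕ)+1) * 1 ≤ ((i:ℕ)+1) * v i := Nat.mul_le_mul_left _ (by omega)
      omega
    rw [this]
    simp
  · rw [if_neg hc]

noncomputable def GZ (k : ℕ) (lam : ℝ) (z : ℤ) : ℝ := if 0 ≤ z then gK k lam z.toNat else 0

noncomputable def DZ (k : ℕ) (lam : ℝ) (z : ℤ) : ℝ := GZ k lam z - GZ k lam (z-1)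

lemma GZ_natCast (k : ℕ) (lam : ℝ) (n : ℕ) : GZ k lam (n : ℤ) = gK k lam n := by
  rw [GZ, if_pos (by positivity), Int.toNat_natCast]

lemma GZ_neg (k : ℕ) (lam : ℝ) {z : ℤ} (hz : z < 0) : GZ k lam z = 0 := by
  rw [GZ, if_neg (by omega)]

lemma GZ_sub_nat (k : ℕ) (lam : ℝ) (n t : ℕ) :
    GZ k lam ((n : ℤ) - ((t:ℤ)+1))
      = if t + 1 ≤ n then gK k lam (n - (t+1)) else 0 := by
  by_cases h : t + 1 ≤ n
  · rw [if_pos h]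
    have e : ((n : ℤ) - ((t:ℤ)+1)) = ((n - (t+1) : ℕ) : ℤ) := by
      push_cast [h]
      omega
    rw [e, GZ_natCast]
  · rw [if_neg h, GZ_neg]
    omega

lemma sum_pos_of_cond {k n : ℕ} {v : Fin k → ℕ} {j : Fin k}
    (hvj : 1 ≤ v j) : 1 ≤ ∑ i : Fin k, v i :=
  le_trans hvj (Finset.single_le_sum (f := fun i : Fin k => v i)
    (fun i _ => Nat.zero_le _) (Finset.mem_univ j))

lemma GZ_rec (k : ℕ) (lam : ℝ) (z : ℤ) :
    (z:ℝ) * GZ k lam z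
      = lam * ∑ t ∈ Finset.range k, ((t:ℝ)+1) * GZ k lam (z - ((t:ℤ)+1)) := by
  rcases lt_or_ge z 0 with hz | hz
  · rw [GZ_neg k lam hz, mul_zero]
    rw [Finset.sum_eq_zero, mul_zero]
    intro t _
    rw [GZ_neg k lam (by omega), mul_zero]
  · obtain ⟨n, rfl⟩ := Int.eq_ofNat_of_zero_le hz
    push_cast
    have main : (n:ℝ) * gK k lam n
        = ∑ j : Fin k, (((j:ℕ):ℝ)+1) * (lam *
            (∑ v ∈ Fintype.piFinset (fun _ : Fin k => Finset.range (n+1)),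
              if (∑ i : Fin k, ((i : ℕ) + 1) * v i) = n then
                (v j : ℝ) * lam ^ ((∑ i : Fin k, v i) - 1)
                  / ((∏ i : Fin k, Nat.factorial (v i) : ℕ) : ℝ)
              else 0)) := by
      rw [gK, Finset.mul_sum]
      have swap : ∀ v ∈ Fintype.piFinset (fun _ : Fin k => Finset.range (n+1)),
          (n:ℝ) * (if (∑ i : Fin k, ((i : ℕ) + 1) * v i) = n then
              lam ^ (∑ i : Fin k, v i) / ((∏ i : Fin k, Nat.factorial (v i) : ℕ) : ℝ) else 0)
          = ∑ j : Fin k, (((j:ℕ):ℝ)+1) * (lam *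
              (if (∑ i : Fin k, ((i : ℕ) + 1) * v i) = n then
                (v j : ℝ) * lam ^ ((∑ i : Fin k, v i) - 1)
                  / ((∏ i : Fin k, Nat.factorial (v i) : ℕ) : ℝ) else 0)) := by
        intro v _
        by_cases hc : (∑ i : Fin k, ((i : ℕ) + 1) * v i) = n
        · rw [if_pos hc]
          have hcast : (n:ℝ) = ∑ j : Fin k, (((j:ℕ):ℝ)+1) * (v j : ℝ) := by
            rw [← hc]
            push_cast
            rfl
          rw [hcast, Finset.sum_mul]
          apply Finset.sum_congr rfl
          intro j _
          rw [if_pos hc]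
          by_cases hvj : 1 ≤ v j
          · have hpow : lam ^ (∑ i : Fin k, v i)
                = lam * lam ^ ((∑ i : Fin k, v i) - 1) := by
              rw [← pow_succ']
              congr 1
              have := sum_pos_of_cond (n := n) hvj
              omega
            rw [hpow]
            ring
          · have hz2 : v j = 0 := by omega
            rw [hz2]
            norm_num
        · rw [if_neg hc]
          simp only [if_neg hc]
          simp
      rw [Finset.sum_congr rfl swap, Finset.sum_comm]
      apply Finset.sum_congr rfl
      intro j _
      rw [← Finset.mul_sum, ← Finset.mul_sum]
    rw [GZ_natCast, main]
    have eval : ∀ j : Fin k,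
        (∑ v ∈ Fintype.piFinset (fun _ : Fin k => Finset.range (n+1)),
          if (∑ i : Fin k, ((i : ℕ) + 1) * v i) = n then
            (v j : ℝ) * lam ^ ((∑ i : Fin k, v i) - 1)
              / ((∏ i : Fin k, Nat.factorial (v i) : ℕ) : ℝ)
          else 0)
        = GZ k lam ((n:ℤ) - ((j:ℕ)+1)) := by
      intro j
      rw [GZ_sub_nat]
      by_cases hj : (j:ℕ) + 1 ≤ n
      · rw [if_pos hj, key_sum_ge k lam j n hj]
      · rw [if_neg hj, key_sum_lt k lam j n (by omega)]
    have : ∀ j : Fin k, (((j:ℕ):ℝ)+1) * (lam *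
        (∑ v ∈ Fintype.piFinset (fun _ : Fin k => Finset.range (n+1)),
          if (∑ i : Fin k, ((i : ℕ) + 1) * v i) = n then
            (v j : ℝ) * lam ^ ((∑ i : Fin k, v i) - 1)
              / ((∏ i : Fin k, Nat.factorial (v i) : ℕ) : ℝ)
          else 0))
        = (((j:ℕ):ℝ)+1) * (lam * GZ k lam ((n:ℤ) - ((j:ℕ)+1))) := by
      intro j
      rw [eval j]
    rw [Finset.sum_congr rfl (fun j _ => this j)]
    rw [Finset.mul_sum]
    rw [Fin.sum_univ_eq_sum_range (fun j => ((j:ℝ)+1) * (lam * GZ k lam ((n:ℤ) - ((j:ℕ)+1))))]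
    apply Finset.sum_congr rfl
    intro t _
    ring

lemma hasDerivAt_gK (k : ℕ) (n : ℕ) (lam : ℝ) :
    HasDerivAt (fun x => gK k x n)
      (∑ t ∈ Finset.range k, GZ k lam ((n:ℤ) - ((t:ℤ)+1))) lam := by
  have hterm : ∀ v ∈ Fintype.piFinset (fun _ : Fin k => Finset.range (n+1)),
      HasDerivAt (fun x : ℝ =>
        if (∑ i : Fin k, ((i : ℕ) + 1) * v i) = n then
          x ^ (∑ i : Fin k, v i) / ((∏ i : Fin k, Nat.factorial (v i) : ℕ) : ℝ)
        else 0)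
      (if (∑ i : Fin k, ((i : ℕ) + 1) * v i) = n then
          ((∑ i : Fin k, v i : ℕ) : ℝ) * lam ^ ((∑ i : Fin k, v i) - 1)
            / ((∏ i : Fin k, Nat.factorial (v i) : ℕ) : ℝ)
        else 0) lam := by
    intro v _
    by_cases hc : (∑ i : Fin k, ((i : ℕ) + 1) * v i) = n
    · simp only [if_pos hc]
      exact (hasDerivAt_pow _ lam).div_const _
    · simp only [if_neg hc]
      exact hasDerivAt_const _ _
  have hsum := HasDerivAt.fun_sum hterm
  have : (∑ v ∈ Fintype.piFinset (fun _ : Fin k => Finset.range (n+1)),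
      if (∑ i : Fin k, ((i : ℕ) + 1) * v i) = n then
        ((∑ i : Fin k, v i : ℕ) : ℝ) * lam ^ ((∑ i : Fin k, v i) - 1)
          / ((∏ i : Fin k, Nat.factorial (v i) : ℕ) : ℝ)
      else 0)
      = ∑ t ∈ Finset.range k, GZ k lam ((n:ℤ) - ((t:ℤ)+1)) := by
    have expand : ∀ v ∈ Fintype.piFinset (fun _ : Fin k => Finset.range (n+1)),
        (if (∑ i : Fin k, ((i : ℕ) + 1) * v i) = n then
          ((∑ i : Fin k, v i : ℕ) : ℝ) * lam ^ ((∑ i : Fin k, v i) - 1)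
            / ((∏ i : Fin k, Nat.factorial (v i) : ℕ) : ℝ)
        else 0)
        = ∑ j : Fin k,
          (if (∑ i : Fin k, ((i : ℕ) + 1) * v i) = n then
            (v j : ℝ) * lam ^ ((∑ i : Fin k, v i) - 1)
              / ((∏ i : Fin k, Nat.factorial (v i) : ℕ) : ℝ)
          else 0) := by
      intro v _
      by_cases hc : (∑ i : Fin k, ((i : ℕ) + 1) * v i) = n
      · simp only [if_pos hc]
        have : ((∑ i : Fin k, v i : ℕ) : ℝ) = ∑ j : Fin k, (v j : ℝ) := by push_cast; rfl
        rw [this, Finset.sum_mul, Finset.sum_div]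
      · simp only [if_neg hc, Finset.sum_const_zero]
    rw [Finset.sum_congr rfl expand, Finset.sum_comm]
    have eval : ∀ j : Fin k,
        (∑ v ∈ Fintype.piFinset (fun _ : Fin k => Finset.range (n+1)),
          if (∑ i : Fin k, ((i : ℕ) + 1) * v i) = n then
            (v j : ℝ) * lam ^ ((∑ i : Fin k, v i) - 1)
              / ((∏ i : Fin k, Nat.factorial (v i) : ℕ) : ℝ)
          else 0)
        = GZ k lam ((n:ℤ) - ((j:ℕ)+1)) := by
      intro j
      rw [GZ_sub_nat]
      by_cases hj : (j:ℕ) + 1 ≤ n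
      · rw [if_pos hj, key_sum_ge k lam j n hj]
      · rw [if_neg hj, key_sum_lt k lam j n (by omega)]
    rw [Finset.sum_congr rfl (fun j _ => eval j)]
    exact Fin.sum_univ_eq_sum_range (fun j => GZ k lam ((n:ℤ) - ((j:ℕ)+1))) k
  rw [← this]
  exact hsum
lemma hasDerivAt_GZ (k : ℕ) (z : ℤ) (lam : ℝ) :
    HasDerivAt (fun x => GZ k x z)
      (∑ t ∈ Finset.range k, GZ k lam (z - ((t:ℤ)+1))) lam := by
  rcases lt_or_ge z 0 with hz | hz
  · have hfun : (fun x : ℝ => GZ k x z) = fun _ => (0:ℝ) :=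
      funext fun x => GZ_neg k x hz
    rw [hfun, Finset.sum_eq_zero (fun t _ => GZ_neg k lam (by omega))]
    exact hasDerivAt_const _ _
  · obtain ⟨n, rfl⟩ := Int.eq_ofNat_of_zero_le hz
    have hfun : (fun x : ℝ => GZ k x (n:ℤ)) = fun x => gK k x n :=
      funext fun x => GZ_natCast k x n
    rw [hfun]
    exact hasDerivAt_gK k n lam

lemma hasDerivAt_DZ (k : ℕ) (z : ℤ) (lam : ℝ) :
    HasDerivAt (fun x => DZ k x z)
      (∑ t ∈ Finset.range k, DZ k lam (z - ((t:ℤ)+1))) lam := by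
  have h1 := (hasDerivAt_GZ k z lam).sub (hasDerivAt_GZ k (z-1) lam)
  have : (∑ t ∈ Finset.range k, GZ k lam (z - ((t:ℤ)+1)))
      - (∑ t ∈ Finset.range k, GZ k lam (z - 1 - ((t:ℤ)+1)))
      = ∑ t ∈ Finset.range k, DZ k lam (z - ((t:ℤ)+1)) := by
    rw [← Finset.sum_sub_distrib]
    apply Finset.sum_congr rfl
    intro t _
    rw [DZ]
    have harg : z - 1 - ((t:ℤ)+1) = z - ((t:ℤ)+1) - 1 := by ring
    rw [harg]
  rw [← this]
  exact h1

/-- sum 1+2+...+k as a real -/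
noncomputable def kR (k : ℕ) : ℝ := ∑ t ∈ Finset.range k, ((t:ℝ)+1)

lemma kR_nonneg (k : ℕ) : 0 ≤ kR k :=
  Finset.sum_nonneg fun t _ => by positivity

lemma kR_pos {k : ℕ} (hk : 1 ≤ k) : 0 < kR k := by
  rw [kR]
  apply Finset.sum_pos (fun t _ => by positivity)
  exact ⟨0, Finset.mem_range.2 (by omega)⟩

lemma kR_mono {u k : ℕ} (h : u ≤ k) : kR u ≤ kR k := by
  rw [kR, kR]
  apply Finset.sum_le_sum_of_subset_of_nonneg
  · exact Finset.range_subset_range.2 h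
  · intro t _ _; positivity

lemma kR_nat (k : ℕ) : kR k = ((k * (k+1) / 2 : ℕ) : ℝ) := by
  have h1 : (∑ t ∈ Finset.range k, (t+1)) = k * (k+1) / 2 := by
    have h2 : (∑ t ∈ Finset.range (k+1), t) = ∑ t ∈ Finset.range k, (t+1) := by
      rw [Finset.sum_range_succ' (fun t => t) k]
      simp
    have h3 := Finset.sum_range_id_mul_two (k+1)
    rw [h2] at h3
    simp only [Nat.add_sub_cancel] at h3
    have h4 : k * (k+1) = (k+1) * k := Nat.mul_comm _ _
    omega
  rw [← h1]
  push_cast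
  rfl

lemma DZ_rec (k : ℕ) (lam : ℝ) (z : ℤ) :
    ((z:ℝ)+1) * DZ k lam (z+1)
      = lam * (∑ t ∈ Finset.range k, ((t:ℝ)+1) * DZ k lam (z - t)) - GZ k lam z := by
  have h1 := GZ_rec k lam (z+1)
  have h2 := GZ_rec k lam z
  have key : ((z:ℝ)+1) * DZ k lam (z+1) + GZ k lam z
      = ((z+1:ℤ):ℝ) * GZ k lam (z+1) - (z:ℝ) * GZ k lam z := by
    rw [DZ, show (z:ℤ) + 1 - 1 = z from by ring]
    push_cast
    ring
  have h3 : ((z+1:ℤ):ℝ) * GZ k lam (z+1) - (z:ℝ) * GZ k lam z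
      = lam * (∑ t ∈ Finset.range k, ((t:ℝ)+1) * DZ k lam (z - t)) := by
    rw [h1, h2, ← mul_sub, ← Finset.sum_sub_distrib]
    congr 1
    apply Finset.sum_congr rfl
    intro t _
    rw [← mul_sub]
    congr 1
    rw [DZ]
    congr 2
    · omega
    · omega
  linarith [key.trans h3]

lemma GZ_tele (k : ℕ) (lam : ℝ) (z : ℤ) (i : ℕ) :
    GZ k lam z - GZ k lam (z - i) = ∑ u ∈ Finset.range i, DZ k lam (z - u) := by
  induction i with
  | zero => simp
  | succ i ih =>
    rw [Finset.sum_range_succ, ← ih, DZ]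
    have : z - (i:ℤ) - 1 = z - ((i:ℕ)+1:ℤ) := by push_cast; ring
    rw [this]
    push_cast
    ring_nf

lemma GZ_window (k : ℕ) (lam : ℝ) (z : ℤ) :
    (kR k * lam - (z:ℝ)) * GZ k lam z
      = lam * ∑ t ∈ Finset.range k, (kR k - kR t) * DZ k lam (z - t) := by
  have h2 := GZ_rec k lam z
  have lhs : (kR k * lam - (z:ℝ)) * GZ k lam z
      = lam * ∑ t ∈ Finset.range k, ((t:ℝ)+1) * (GZ k lam z - GZ k lam (z - ((t:ℤ)+1))) := by
    calc (kR k * lam - (z:ℝ)) * GZ k lam z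
        = lam * ((∑ t ∈ Finset.range k, ((t:ℝ)+1)) * GZ k lam z)
            - lam * (∑ t ∈ Finset.range k, ((t:ℝ)+1) * GZ k lam (z - ((t:ℤ)+1))) := by
          rw [sub_mul, h2, kR]; ring
      _ = lam * ∑ t ∈ Finset.range k,
            (((t:ℝ)+1) * GZ k lam z - ((t:ℝ)+1) * GZ k lam (z - ((t:ℤ)+1))) := by
          rw [Finset.sum_sub_distrib, ← Finset.sum_mul, mul_sub]
      _ = lam * ∑ t ∈ Finset.range k, ((t:ℝ)+1) * (GZ k lam z - GZ k lam (z - ((t:ℤ)+1))) := by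
          congr 1
          apply Finset.sum_congr rfl
          intro t _
          ring
  rw [lhs]
  congr 1
  have tele : ∀ t ∈ Finset.range k, ((t:ℝ)+1) * (GZ k lam z - GZ k lam (z - ((t:ℤ)+1)))
      = ∑ u ∈ Finset.range k, (if u ≤ t then ((t:ℝ)+1) * DZ k lam (z - u) else 0) := by
    intro t ht
    rw [show z - ((t:ℤ)+1) = z - ((t+1 : ℕ) : ℤ) by push_cast; ring]
    rw [GZ_tele k lam z (t+1), Finset.mul_sum]
    rw [← Finset.sum_filter]
    have hset : (Finset.range k).filter (fun u => u ≤ t) = Finset.range (t+1) := by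
      ext u
      simp only [Finset.mem_filter, Finset.mem_range]
      rw [Finset.mem_range] at ht
      omega
    rw [hset]
  rw [Finset.sum_congr rfl tele, Finset.sum_comm]
  apply Finset.sum_congr rfl
  intro u hu
  have factor : ∀ t ∈ Finset.range k,
      (if u ≤ t then ((t:ℝ)+1) * DZ k lam (z - u) else 0)
      = (if u ≤ t then ((t:ℝ)+1) else 0) * DZ k lam (z - u) := by
    intro t _
    split <;> simp
  rw [Finset.sum_congr rfl factor, ← Finset.sum_mul]
  congr 1
  have split := Finset.sum_filter_add_sum_filter_not (Finset.range k)
    (fun t => u ≤ t) (fun t => ((t:ℝ)+1))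
  have hneg : (Finset.range k).filter (fun t => ¬ u ≤ t) = Finset.range u := by
    ext t
    simp only [Finset.mem_filter, Finset.mem_range]
    rw [Finset.mem_range] at hu
    omega
  rw [hneg] at split
  rw [Finset.sum_filter] at split
  have : kR u = ∑ t ∈ Finset.range u, ((t:ℝ)+1) := rfl
  rw [this]
  have : kR k = ∑ t ∈ Finset.range k, ((t:ℝ)+1) := rfl
  rw [this]
  linarith [split]

lemma boundary_identity (k : ℕ) (hk : 1 ≤ k) (lam : ℝ) (n : ℕ)
    (hb : kR k * lam = (n:ℝ) + kR k) :
    ((n:ℝ)+1) * DZ k lam ((n:ℤ)+1)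
      = lam * ∑ t ∈ Finset.range k, ((t:ℝ) + kR t / kR k) * DZ k lam ((n:ℤ) - t) := by
  have hkR := kR_pos hk
  have h1 := DZ_rec k lam (n:ℤ)
  push_cast at h1
  have h2 := GZ_window k lam (n:ℤ)
  have hgz : GZ k lam (n:ℤ)
      = lam * ∑ t ∈ Finset.range k, ((kR k - kR t)/kR k) * DZ k lam ((n:ℤ) - t) := by
    have hco : kR k * lam - ((n:ℤ):ℝ) = kR k := by push_cast; linarith [hb]
    rw [hco] at h2
    have h4 : GZ k lam (n:ℤ)
        = (lam * ∑ t ∈ Finset.range k, (kR k - kR t) * DZ k lam ((n:ℤ) - t)) / kR k := by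
      rw [eq_div_iff (ne_of_gt hkR)]
      linarith [h2]
    rw [h4, Finset.mul_sum, Finset.mul_sum, Finset.sum_div]
    apply Finset.sum_congr rfl
    intro t _
    field_simp
  rw [h1, hgz, Finset.mul_sum, Finset.mul_sum, Finset.mul_sum, ← Finset.sum_sub_distrib]
  apply Finset.sum_congr rfl
  intro t _
  have : (t:ℝ) + kR t / kR k = ((t:ℝ)+1) - (kR k - kR t)/kR k := by
    field_simp
    ring
  rw [this]
  ring

lemma GZ_zero (k : ℕ) (lam : ℝ) : GZ k lam 0 = 1 := by
  have : ((0:ℕ):ℤ) = (0:ℤ) := rfl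
  rw [← this, GZ_natCast, gK_zero]

lemma DZ_zero (k : ℕ) (lam : ℝ) : DZ k lam 0 = 1 := by
  rw [DZ, GZ_zero, GZ_neg k lam (by omega)]
  ring

lemma DZ_of_neg (k : ℕ) (lam : ℝ) {z : ℤ} (hz : z < 0) : DZ k lam z = 0 := by
  rw [DZ, GZ_neg k lam hz, GZ_neg k lam (by omega)]
  ring

lemma GZ_one {k : ℕ} (hk : 1 ≤ k) (lam : ℝ) : GZ k lam 1 = lam := by
  have h := GZ_rec k lam 1
  have hsum : (∑ t ∈ Finset.range k, ((t:ℝ)+1) * GZ k lam (1 - ((t:ℤ)+1))) = 1 := by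
    rw [Finset.sum_eq_single 0]
    · norm_num [GZ_zero]
    · intro t _ ht
      rw [GZ_neg k lam (by omega), mul_zero]
    · intro h0
      exact absurd (Finset.mem_range.2 (by omega)) h0
  rw [hsum, mul_one] at h
  simpa using h

/-- `a_1 - a_0 = lam - 1` -/
lemma DZ_one {k : ℕ} (hk : 1 ≤ k) (lam : ℝ) : DZ k lam 1 = lam - 1 := by
  rw [DZ, GZ_one hk, show (1:ℤ) - 1 = 0 from rfl, GZ_zero]

/-- Main nonnegativity lemma: `kλ ≥ n + k  →  a_{n+1} ≥ a_n`. -/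
lemma DZ_nonneg_main (k : ℕ) (hk : 1 ≤ k) :
    ∀ n : ℕ, ∀ lam : ℝ, 0 < lam → ((n:ℝ) + kR k ≤ kR k * lam) →
      0 ≤ DZ k lam ((n:ℤ)+1) := by
  intro n
  induction n using Nat.strong_induction_on with
  | _ n ih =>
    intro lam hlam hcond
    have hkR := kR_pos hk
    set lb : ℝ := ((n:ℝ) + kR k)/kR k with hlb
    have hlb_pos : 0 < lb := by positivity
    have hlb_eq : kR k * lb = (n:ℝ) + kR k := by
      rw [hlb]; field_simp
    have hlb_le : lb ≤ lam := by
      rw [hlb, div_le_iff₀ hkR]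
      linarith [hcond]
    -- the window terms are nonnegative for every μ ≥ lb
    have hwin : ∀ (t : ℕ), ∀ μ : ℝ, 0 < μ → kR k * lb ≤ kR k * μ →
        0 ≤ DZ k μ ((n:ℤ) - t) := by
      intro t μ hμ hμ2
      rcases lt_trichotomy ((n:ℤ) - t) 0 with hz | hz | hz
      · rw [DZ_of_neg k μ hz]
      · rw [hz, DZ_zero]
        norm_num
      · -- n - t ≥ 1, i.e. t ≤ n - 1
        have htn : t + 1 ≤ n := by omega
        have hzz : (n:ℤ) - t = ((n - (t+1) : ℕ) : ℤ) + 1 := by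
          omega
        rw [hzz]
        apply ih (n - (t+1)) (by omega) μ hμ
        have hcast : ((n - (t+1) : ℕ) : ℝ) ≤ (n:ℝ) :=
          Nat.cast_le.mpr (Nat.sub_le _ _)
        calc ((n - (t+1) : ℕ) : ℝ) + kR k ≤ (n:ℝ) + kR k := by linarith
          _ = kR k * lb := hlb_eq.symm
          _ ≤ kR k * μ := hμ2
    -- nonnegativity at the left endpoint lb
    have hbase : 0 ≤ DZ k lb ((n:ℤ)+1) := by
      have hbid := boundary_identity k hk lb n hlb_eq
      have hrhs : 0 ≤ lb * ∑ t ∈ Finset.range k, ((t:ℝ) + kR t / kR k) * DZ k lb ((n:ℤ) - t) := by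
        apply mul_nonneg hlb_pos.le
        apply Finset.sum_nonneg
        intro t _
        apply mul_nonneg
        · have := kR_nonneg t
          positivity
        · exact hwin t lb hlb_pos le_rfl
      nlinarith [hbid, hrhs]
    -- monotonicity on [lb, lam]
    rcases eq_or_lt_of_le hlb_le with heq | hlt
    · rw [← heq]; exact hbase
    · have hmono : MonotoneOn (fun x => DZ k x ((n:ℤ)+1)) (Set.Icc lb lam) := by
        apply monotoneOn_of_hasDerivWithinAt_nonneg (f' := fun x =>
            ∑ t ∈ Finset.range k, DZ k x (((n:ℤ)+1) - ((t:ℤ)+1)))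
          (convex_Icc _ _)
        · intro x _
          exact (hasDerivAt_DZ k ((n:ℤ)+1) x).continuousAt.continuousWithinAt
        · intro x hx
          exact (hasDerivAt_DZ k ((n:ℤ)+1) x).hasDerivWithinAt
        · intro x hx
          rw [interior_Icc] at hx
          obtain ⟨hx1, hx2⟩ := hx
          apply Finset.sum_nonneg
          intro t _
          have harg : ((n:ℤ)+1) - ((t:ℤ)+1) = (n:ℤ) - t := by ring
          rw [harg]
          have hxpos : 0 < x := lt_trans hlb_pos hx1
          exact hwin t x hxpos (by nlinarith [hx1])
      have := hmono (Set.left_mem_Icc.2 hlb_le) (Set.right_mem_Icc.2 hlb_le) hlb_le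
      simp only at this
      linarith [hbase, this]

/-- nonnegativity for arbitrary integer index -/
lemma DZ_nonneg_all (k : ℕ) (hk : 1 ≤ k) (z : ℤ) (lam : ℝ) (hlam : 0 < lam)
    (hcond : (z:ℝ) + kR k ≤ kR k * lam + 1) : 0 ≤ DZ k lam z := by
  rcases lt_trichotomy z 0 with hz | hz | hz
  · rw [DZ_of_neg k lam hz]
  · rw [hz, DZ_zero]; norm_num
  · have hzz : z = ((z.toNat - 1 : ℕ) : ℤ) + 1 := by omega
    rw [hzz]
    apply DZ_nonneg_main k hk _ lam hlam
    have hcast : (((z.toNat - 1 : ℕ) : ℤ) : ℝ) = (z:ℝ) - 1 := by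
      have : ((z.toNat - 1 : ℕ) : ℤ) = z - 1 := by omega
      rw [this]
      push_cast
      ring
    rw [show (((z.toNat - 1 : ℕ)):ℝ) = (((z.toNat - 1 : ℕ) : ℤ) : ℝ) from by push_cast; ring,
      hcast]
    linarith [hcond]

/-- Main strict positivity lemma: `kλ > n + k  →  a_{n+1} > a_n`. -/
lemma DZ_pos_main (k : ℕ) (hk : 1 ≤ k) :
    ∀ n : ℕ, ∀ lam : ℝ, 0 < lam → ((n:ℝ) + kR k < kR k * lam) →
      0 < DZ k lam ((n:ℤ)+1) := by
  intro n
  induction n using Nat.strong_induction_on with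
  | _ n ih =>
    intro lam hlam hcond
    have hkR := kR_pos hk
    rcases Nat.eq_zero_or_pos n with hn0 | hnpos
    · subst hn0
      rw [show ((0:ℕ):ℤ) + 1 = (1:ℤ) from rfl, DZ_one hk]
      have : kR k * 1 < kR k * lam := by
        simpa using hcond
      have := lt_of_mul_lt_mul_left this (kR_nonneg k)
      linarith
    · set lb : ℝ := ((n:ℝ) + kR k)/kR k with hlb
      have hlb_pos : 0 < lb := by positivity
      have hlb_eq : kR k * lb = (n:ℝ) + kR k := by
        rw [hlb]; field_simp
      have hlb_lt : lb < lam := by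
        rw [hlb, div_lt_iff₀ hkR]
        linarith [hcond]
      have hbase : 0 ≤ DZ k lb ((n:ℤ)+1) :=
        DZ_nonneg_main k hk n lb hlb_pos (le_of_eq hlb_eq.symm)
      have hstrict : StrictMonoOn (fun x => DZ k x ((n:ℤ)+1)) (Set.Icc lb lam) := by
        apply strictMonoOn_of_hasDerivWithinAt_pos (f' := fun x =>
            ∑ t ∈ Finset.range k, DZ k x (((n:ℤ)+1) - ((t:ℤ)+1)))
          (convex_Icc _ _)
        · intro x _
          exact (hasDerivAt_DZ k ((n:ℤ)+1) x).continuousAt.continuousWithinAt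
        · intro x hx
          exact (hasDerivAt_DZ k ((n:ℤ)+1) x).hasDerivWithinAt
        · intro x hx
          rw [interior_Icc] at hx
          obtain ⟨hx1, hx2⟩ := hx
          have hxpos : 0 < x := lt_trans hlb_pos hx1
          apply Finset.sum_pos'
          · intro t _
            have harg : ((n:ℤ)+1) - ((t:ℤ)+1) = (n:ℤ) - t := by ring
            rw [harg]
            apply DZ_nonneg_all k hk _ x hxpos
            have h1 : ((n:ℤ) - (t:ℤ) : ℝ) ≤ (n:ℝ) := by
              push_cast
              have : (0:ℝ) ≤ (t:ℝ) := by positivity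
              linarith
            have h2 : kR k * lb ≤ kR k * x := by nlinarith [hx1]
            push_cast
            push_cast at h1
            nlinarith [hlb_eq]
          · refine ⟨0, Finset.mem_range.2 (by omega), ?_⟩
            have harg : ((n:ℤ)+1) - (((0:ℕ):ℤ)+1) = ((n-1 : ℕ):ℤ) + 1 := by
              omega
            rw [harg]
            apply ih (n-1) (by omega) x hxpos
            have hcast : ((n - 1 : ℕ) : ℝ) ≤ (n:ℝ) - 1 := by
              have : ((n-1:ℕ):ℝ) = (n:ℝ) - 1 := by
                have h9 : ((n-1:ℕ):ℤ) = (n:ℤ) - 1 := by omega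
                exact_mod_cast congrArg (fun z : ℤ => (z:ℝ)) h9
              linarith [this.le]
            nlinarith [hx1, hlb_eq]
      have hfin := hstrict (Set.left_mem_Icc.2 hlb_lt.le) (Set.right_mem_Icc.2 hlb_lt.le) hlb_lt
      simp only at hfin
      linarith [hbase, hfin]

/-- For every integer k ≥ 1 and real λ > 0, every mode m of the Poisson
distribution of order k satisfies
max(0, ⌊κλ⌋ − κ + 1 − δ_(k,1)) ≤ m ≤ ⌊κλ⌋, where κ = k(k+1)/2. -/
theorem poissonOrderK_mode_bounds (k : ℕ) (hk : 1 ≤ k) (lam : ℝ) (hlam : 0 < lam)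
    (m : ℕ) (hm : ∀ j : ℕ, poissonOrderKPmf k lam j ≤ poissonOrderKPmf k lam m) :
    max 0 (⌊((k * (k + 1) / 2 : ℕ) : ℝ) * lam⌋ - ((k * (k + 1) / 2 : ℕ) : ℤ) + 1
        - (if k = 1 then 1 else 0)) ≤ (m : ℤ) ∧
    (m : ℤ) ≤ ⌊((k * (k + 1) / 2 : ℕ) : ℝ) * lam⌋ := by
  have hkR : 0 < kR k := kR_pos hk
  have hexp : (0:ℝ) < Real.exp (-(k * lam)) := Real.exp_pos _
  -- transfer mode property
  have hg : ∀ j : ℕ, gK k lam j ≤ gK k lam m := by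
    intro j
    have := hm j
    rw [pmf_eq_gK, pmf_eq_gK] at this
    exact le_of_mul_le_mul_left this hexp
  have hGZ : ∀ z : ℤ, GZ k lam z ≤ GZ k lam (m:ℤ) := by
    intro z
    rcases lt_or_ge z 0 with hz | hz
    · rw [GZ_neg k lam hz, GZ_natCast]
      exact (gK_pos hk hlam m).le
    · obtain ⟨n, rfl⟩ := Int.eq_ofNat_of_zero_le hz
      rw [GZ_natCast, GZ_natCast]
      exact hg n
  have hgm : 0 < GZ k lam (m:ℤ) := by
    rw [GZ_natCast]; exact gK_pos hk hlam m
  -- upper bound : m ≤ kR * lam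
  have hup : (m:ℝ) ≤ kR k * lam := by
    have hrec := GZ_rec k lam (m:ℤ)
    have hb : lam * (∑ t ∈ Finset.range k, ((t:ℝ)+1) * GZ k lam ((m:ℤ) - ((t:ℤ)+1)))
        ≤ lam * (kR k * GZ k lam (m:ℤ)) := by
      apply mul_le_mul_of_nonneg_left _ hlam.le
      rw [kR, Finset.sum_mul]
      apply Finset.sum_le_sum
      intro t _
      apply mul_le_mul_of_nonneg_left (hGZ _) (by positivity)
    push_cast at hrec
    nlinarith [hrec, hb, hgm]
  -- strict bound : kR * lam ≤ m + kR
  have hA : kR k * lam ≤ (m:ℝ) + kR k := by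
    by_contra hcon
    push_neg at hcon
    have hpos := DZ_pos_main k hk m lam hlam hcon
    rw [DZ] at hpos
    have := hGZ ((m:ℤ)+1)
    rw [show (m:ℤ)+1-1 = (m:ℤ) from by ring] at hpos
    linarith
  -- upper conclusion
  have hupper : (m : ℤ) ≤ ⌊((k * (k + 1) / 2 : ℕ) : ℝ) * lam⌋ := by
    apply Int.le_floor.mpr
    rw [← kR_nat]
    push_cast
    exact hup
  refine ⟨?_, hupper⟩
  by_cases hk1 : k = 1
  · -- k = 1 case
    subst hk1
    simp only [if_pos rfl]
    have hkr1 : kR 1 = 1 := by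
      rw [kR]
      norm_num
    rw [hkr1] at hA
    apply max_le (by positivity)
    have hle : ((1 * (1 + 1) / 2 : ℕ) : ℝ) * lam ≤ (((m:ℤ) + 1 : ℤ) : ℝ) := by
      push_cast
      norm_num
      linarith [hA]
    have hfl : ⌊((1 * (1 + 1) / 2 : ℕ) : ℝ) * lam⌋ ≤ (m:ℤ) + 1 := by
      calc ⌊((1 * (1 + 1) / 2 : ℕ) : ℝ) * lam⌋ ≤ ⌊(((m:ℤ) + 1 : ℤ) : ℝ)⌋ :=
            Int.floor_le_floor hle
        _ = (m:ℤ) + 1 := Int.floor_intCast _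
    have hone : ((1 * (1 + 1) / 2 : ℕ) : ℤ) = 1 := by norm_num
    rw [hone]
    simp only [if_true]
    omega
  · -- k ≥ 2 case
    have hk2 : 2 ≤ k := by omega
    simp only [if_neg hk1]
    -- strict : kR * lam < m + kR
    have hB : kR k * lam < (m:ℝ) + kR k := by
      rcases lt_or_eq_of_le hA with h | h
      · exact h
      · exfalso
        -- boundary case kR*lam = m + kR
        rcases Nat.eq_zero_or_pos m with hm0 | hmpos
        · -- m = 0 , lam = 1 : but then a_2 = 3/2 > 1 = a_0
          subst hm0
          have hlam1 : lam = 1 := by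
            have h5 : kR k * lam = kR k * 1 := by push_cast at h; linarith
            exact mul_left_cancel₀ (ne_of_gt hkR) h5
          subst hlam1
          have h2rec := GZ_rec k 1 (2:ℤ)
          have hsum : (∑ t ∈ Finset.range k, ((t:ℝ)+1) * GZ k 1 ((2:ℤ) - ((t:ℤ)+1)))
              = 3 := by
            have hsplit : Finset.range k = Finset.range 2 ∪ Finset.Ico 2 k := by
              rw [Finset.range_eq_Ico]
              exact (Finset.Ico_union_Ico_eq_Ico (by omega) (by omega)).symm
            rw [hsplit, Finset.sum_union]
            · have h1 : (∑ t ∈ Finset.range 2, ((t:ℝ)+1) * GZ k 1 ((2:ℤ) - ((t:ℤ)+1)))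
                  = 3 := by
                rw [Finset.sum_range_succ, Finset.sum_range_succ, Finset.sum_range_zero]
                norm_num [GZ_one hk, GZ_zero]
              have h2 : (∑ t ∈ Finset.Ico 2 k, ((t:ℝ)+1) * GZ k 1 ((2:ℤ) - ((t:ℤ)+1)))
                  = 0 := by
                apply Finset.sum_eq_zero
                intro t ht
                rw [Finset.mem_Ico] at ht
                rw [GZ_neg k 1 (by omega), mul_zero]
              rw [h1, h2]
              ring
            · rw [Finset.range_eq_Ico]
              apply Finset.Ico_disjoint_Ico_consecutive
          rw [hsum] at h2rec
          push_cast at h2rec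
          have hg2 : GZ k 1 (2:ℤ) = 3/2 := by linarith [h2rec]
          have hcontra := hGZ (2:ℤ)
          rw [hg2] at hcontra
          have h0 : GZ k 1 ((0:ℕ):ℤ) = 1 := by
            rw [Nat.cast_zero]
            exact GZ_zero k 1
          rw [h0] at hcontra
          linarith
        · -- m ≥ 1 boundary case
          have hbid := boundary_identity k hk lam m (by push_cast at h ⊢; linarith)
          have hlhs : ((m:ℝ)+1) * DZ k lam ((m:ℤ)+1) ≤ 0 := by
            apply mul_nonpos_of_nonneg_of_nonpos (by positivity)
            rw [DZ, show (m:ℤ)+1-1 = (m:ℤ) from by ring]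
            linarith [hGZ ((m:ℤ)+1)]
          have hrhs : 0 < lam * ∑ t ∈ Finset.range k,
              ((t:ℝ) + kR t / kR k) * DZ k lam ((m:ℤ) - t) := by
            apply mul_pos hlam
            apply Finset.sum_pos'
            · intro t _
              apply mul_nonneg
              · have := kR_nonneg t
                positivity
              · apply DZ_nonneg_all k hk _ lam hlam
                push_cast
                have : (0:ℝ) ≤ (t:ℝ) := by positivity
                linarith [h]
            · refine ⟨1, Finset.mem_range.2 (by omega), ?_⟩
              have hco : (0:ℝ) < (1:ℕ) + kR 1 / kR k := by
                have h1 : kR 1 = 1 := by rw [kR]; norm_num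
                rw [h1]
                positivity
              apply mul_pos hco
              rcases Nat.lt_or_ge m 2 with hm1 | hm2
              · rw [show (m:ℤ) - (1:ℕ) = 0 from by omega, DZ_zero]
                norm_num
              · have harg : (m:ℤ) - (1:ℕ) = ((m - 2 : ℕ):ℤ) + 1 := by omega
                rw [harg]
                apply DZ_pos_main k hk (m-2) lam hlam
                have hcast : ((m - 2 : ℕ) : ℝ) < (m:ℝ) := by
                  have : ((m-2:ℕ):ℤ) < (m:ℤ) := by omega
                  exact_mod_cast this
                push_cast at h ⊢
                linarith [h]
          linarith [hbid, hlhs, hrhs]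
    -- conclude lower bound for k ≥ 2
    apply max_le (by positivity)
    have hfl : ⌊((k * (k + 1) / 2 : ℕ) : ℝ) * lam⌋ < (m:ℤ) + ((k * (k + 1) / 2 : ℕ) : ℤ) := by
      apply Int.floor_lt.mpr
      rw [← kR_nat]
      have hcast9 : (((m:ℤ) + ((k * (k + 1) / 2 : ℕ) : ℤ) : ℤ) : ℝ)
          = (m:ℝ) + ((k * (k + 1) / 2 : ℕ) : ℝ) := by
        norm_cast
      rw [hcast9, ← kR_nat]
      linarith [hB]
    omega
end

section
/- For every integer k ≥ 1 and every real λ > 0, if 0 < λ < 2/(k(k+1)) (equivalently κλ < 1), then the Poisson distribution of order k with parameter λ has a unique mode, equal to 0; that is, f_k(0;λ) > f_k(n;λ) for every integer n ≥ 1. -/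
open scoped BigOperators

/-- For every integer k ≥ 1 and real λ with 0 < λ < 2/(k(k+1))
(equivalently κλ < 1), the Poisson distribution of order k has a unique mode, equal to 0:
f_k(0;λ) > f_k(n;λ) for every integer n ≥ 1. -/
theorem poissonOrderK_unique_mode_zero (k : ℕ) (hk : 1 ≤ k) (lam : ℝ) (hlam : 0 < lam)
    (hlt : lam < 2 / ((k : ℝ) * ((k : ℝ) + 1))) :
    ∀ n : ℕ, 1 ≤ n → poissonOrderKPmf k lam n < poissonOrderKPmf k lam 0 := by
  intro n hn
  have hk0 : (0:ℝ) < k := by exact_mod_cast hk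
  -- value at 0
  have h0 : poissonOrderKPmf k lam 0 = Real.exp (-(k * lam)) := by
    unfold poissonOrderKPmf
    rw [tsum_eq_single (0 : Fin k → ℕ)]
    · simp
    · intro v hv
      rw [if_neg]
      intro hsum
      apply hv
      funext i
      have h1 := (Finset.sum_eq_zero_iff).mp hsum i (Finset.mem_univ i)
      simpa using h1
  have hS : (∑' v : Fin k → ℕ,
      if (∑ i : Fin k, ((i : ℕ) + 1) * v i) = n then
        lam ^ (∑ i : Fin k, v i) / ((∏ i : Fin k, Nat.factorial (v i) : ℕ) : ℝ)
      else 0) < 1 := by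
    rcases eq_or_lt_of_le hk with hk1 | hk2
    · -- case k = 1
      subst hk1
      have hlam1 : lam < 1 := by
        norm_num at hlt
        exact hlt
      rw [tsum_eq_single (fun _ : Fin 1 => n)]
      · rw [if_pos (by simp [Fin.sum_univ_one])]
        simp only [Fin.sum_univ_one, Finset.prod_singleton, Fin.prod_univ_one]
        have h1 : lam ^ n ≤ lam := by
          have := pow_le_pow_of_le_one hlam.le hlam1.le hn
          simpa using this
        have h2 : (1:ℝ) ≤ (Nat.factorial n : ℝ) := by
          exact_mod_cast Nat.one_le_iff_ne_zero.mpr (Nat.factorial_ne_zero n)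
        calc lam ^ n / (Nat.factorial n : ℝ) ≤ lam ^ n / 1 := by
              apply div_le_div_of_nonneg_left (by positivity) one_pos h2
          _ = lam ^ n := by ring
          _ ≤ lam := h1
          _ < 1 := hlam1
      · intro v hv
        rw [if_neg]
        simp only [Fin.sum_univ_one]
        intro h
        apply hv
        funext i
        have : i = 0 := Subsingleton.elim i 0
        rw [this]
        simpa using h
    · -- case 2 ≤ k
      have hk2' : (2:ℝ) ≤ k := by exact_mod_cast hk2
      set F : Finset (Fin k → ℕ) :=
        Fintype.piFinset (fun _ : Fin k => Finset.range (n+1)) with hF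
      have hsupp : ∀ v : Fin k → ℕ, v ∉ F →
          (if (∑ i : Fin k, ((i : ℕ) + 1) * v i) = n then
            lam ^ (∑ i : Fin k, v i) / ((∏ i : Fin k, Nat.factorial (v i) : ℕ) : ℝ)
          else 0) = 0 := by
        intro v hv
        rw [if_neg]
        intro heq
        rw [hF, Fintype.mem_piFinset] at hv
        push_neg at hv
        obtain ⟨i, hi⟩ := hv
        rw [Finset.mem_range, not_lt] at hi
        have h1 : v i ≤ ∑ j : Fin k, ((j:ℕ)+1) * v j := by
          calc v i ≤ ((i:ℕ)+1) * v i := Nat.le_mul_of_pos_left _ (Nat.succ_pos _)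
            _ ≤ _ := Finset.single_le_sum (f := fun j : Fin k => ((j:ℕ)+1) * v j)
                (fun j _ => Nat.zero_le _) (Finset.mem_univ i)
        omega
      rw [tsum_eq_sum hsupp]
      set g : (Fin k → ℕ) → ℝ := fun v =>
        lam ^ (∑ i : Fin k, v i) / ((∏ i : Fin k, Nat.factorial (v i) : ℕ) : ℝ) with hg
      have hgnn : ∀ v, 0 ≤ g v := by
        intro v
        apply div_nonneg (by positivity) (by positivity)
      have h0F : (0 : Fin k → ℕ) ∈ F := by
        rw [hF, Fintype.mem_piFinset]
        intro i
        simp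
      have hg0 : g 0 = 1 := by simp [hg]
      set A : ℝ := ∑ m ∈ Finset.range (n+1), lam ^ m / (Nat.factorial m : ℝ) with hA
      have hAk : ∑ v ∈ F, g v = A ^ k := by
        have key : ∀ v : Fin k → ℕ, g v = ∏ i : Fin k, lam ^ (v i) / ((v i).factorial : ℝ) := by
          intro v
          simp only [hg]
          rw [Finset.prod_div_distrib, Finset.prod_pow_eq_pow_sum, Nat.cast_prod]
        have hpus := Finset.prod_univ_sum (κ := fun _ : Fin k => ℕ)
          (fun _ => Finset.range (n+1)) (fun _ m => lam ^ m / (m.factorial : ℝ))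
        rw [Finset.sum_congr rfl (fun v _ => key v), hF, ← hpus,
          Finset.prod_const, Finset.card_univ, Fintype.card_fin, hA]
      have hstep : (∑ v ∈ F,
          if (∑ i : Fin k, ((i : ℕ) + 1) * v i) = n then g v else 0) ≤ A ^ k - 1 := by
        have hb : ∀ v ∈ F,
            (if (∑ i : Fin k, ((i : ℕ) + 1) * v i) = n then g v else 0)
              ≤ (if v = 0 then 0 else g v) := by
          intro v _
          by_cases hv0 : v = 0
          · subst hv0
            rw [if_pos rfl, if_neg (by simp; omega)]
          · rw [if_neg hv0]
            split
            · exact le_rfl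
            · exact hgnn v
        calc (∑ v ∈ F, if (∑ i : Fin k, ((i : ℕ) + 1) * v i) = n then g v else 0)
            ≤ ∑ v ∈ F, (if v = 0 then 0 else g v) := Finset.sum_le_sum hb
          _ = ∑ v ∈ F, (g v - if v = 0 then g v else 0) := by
              apply Finset.sum_congr rfl
              intro v _
              split <;> ring
          _ = (∑ v ∈ F, g v) - ∑ v ∈ F, (if v = 0 then g v else 0) :=
              Finset.sum_sub_distrib _ _
          _ = A ^ k - 1 := by
              rw [hAk, Finset.sum_ite_eq' F 0 g, if_pos h0F, hg0]
      have hklog : (k:ℝ) * lam < Real.log 2 := by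
        have hpos : (0:ℝ) < (k:ℝ) * ((k:ℝ) + 1) := by positivity
        have h1 : lam * ((k:ℝ) * ((k:ℝ)+1)) < 2 := (lt_div_iff₀ hpos).mp hlt
        have h2 : (0.6931471803 : ℝ) < Real.log 2 := Real.log_two_gt_d9
        nlinarith [mul_pos hk0 hlam]
      have hA2 : A ^ k < 2 := by
        have hA0 : (0:ℝ) ≤ A := by
          apply Finset.sum_nonneg
          intro m _
          positivity
        have h1 : A ≤ Real.exp lam := Real.sum_le_exp_of_nonneg hlam.le (n+1)
        have h2 : A ^ k ≤ Real.exp lam ^ k := pow_le_pow_left₀ hA0 h1 k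
        calc A ^ k ≤ Real.exp lam ^ k := h2
          _ = Real.exp ((k:ℝ) * lam) := (Real.exp_nat_mul lam k).symm
          _ < Real.exp (Real.log 2) := Real.exp_lt_exp.mpr hklog
          _ = 2 := Real.exp_log two_pos
      exact lt_of_le_of_lt hstep (by linarith)
  rw [h0]
  unfold poissonOrderKPmf
  have h2 := mul_lt_mul_of_pos_left hS (Real.exp_pos (-((k:ℝ) * lam)))
  rw [mul_one] at h2
  exact h2
end

section
/- For every integer k ≥ 1, real λ > 0, and every integer n ≥ 1, the pmf of the Poisson distribution of order k satisfies the recurrence n·f_k(n;λ) = λ · Σ_{j=1}^{k} j·f_k(n−j;λ), where f_k(m;λ) is defined to be 0 for m < 0, with initial value f_k(0;λ) = e^{−kλ}. Equivalently, for 1 ≤ n ≤ k one has n·f_k(n;λ) = λ Σ_{j=1}^{n} j·f_k(n−j;λ) and for n > k one has n·f_k(n;λ) = λ Σ_{j=1}^{k} j·f_k(n−j;λ). -/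
open scoped BigOperators

namespace PoisAux

variable (k : ℕ) (lam : ℝ)

def W (v : Fin k → ℕ) : ℕ := ∑ i : Fin k, ((i : ℕ) + 1) * v i

noncomputable def T (v : Fin k → ℕ) : ℝ :=
  lam ^ (∑ i : Fin k, v i) / ((∏ i : Fin k, Nat.factorial (v i) : ℕ) : ℝ)

def P (n : ℕ) : Finset (Fin k → ℕ) :=
  (Fintype.piFinset fun _ : Fin k => Finset.range (n + 1)).filter (fun v => W k v = n)

lemma mem_P {n : ℕ} {v : Fin k → ℕ} : v ∈ P k n ↔ W k v = n := by
  constructor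
  · intro h; exact (Finset.mem_filter.mp h).2
  · intro h
    refine Finset.mem_filter.mpr ⟨Fintype.mem_piFinset.mpr fun i => ?_, h⟩
    rw [Finset.mem_range, Nat.lt_succ_iff, ← h]
    calc v i = 1 * v i := (one_mul _).symm
    _ ≤ ((i:ℕ)+1) * v i := Nat.mul_le_mul_right _ (Nat.succ_le_succ (Nat.zero_le _))
    _ ≤ W k v := Finset.single_le_sum (f := fun j : Fin k => ((j:ℕ)+1) * v j) (fun j _ => Nat.zero_le _) (Finset.mem_univ i)

noncomputable def F (n : ℕ) : ℝ := ∑ v ∈ P k n, T k lam v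

lemma pmf_eq (n : ℕ) :
    poissonOrderKPmf k lam n = Real.exp (-(k * lam)) * F k lam n := by
  unfold poissonOrderKPmf F
  congr 1
  show (∑' v : Fin k → ℕ, if (∑ i : Fin k, ((i : ℕ) + 1) * v i) = n then T k lam v else 0) = _
  rw [tsum_eq_sum (s := Fintype.piFinset fun _ : Fin k => Finset.range (n + 1))
    (f := fun v => if (∑ i : Fin k, ((i : ℕ) + 1) * v i) = n then T k lam v else 0)]
  · rw [P, Finset.sum_filter]
    rfl
  · intro v hv
    rw [if_neg]
    intro h
    exact hv (Finset.mem_filter.mp ((mem_P k).mpr h)).1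

end PoisAux

namespace PoisAux

variable (k : ℕ) (lam : ℝ)

lemma comp_update {M : Type*} (c : Fin k → ℕ → M) (v : Fin k → ℕ) (i : Fin k) (b : ℕ) :
    (fun j => c j (Function.update v i b j)) = Function.update (fun j => c j (v j)) i (c i b) := by
  funext j
  rcases eq_or_ne j i with rfl | h
  · simp
  · simp [Function.update_of_ne h]

lemma sum_comp_update {M : Type*} [AddCommMonoid M] (c : Fin k → ℕ → M) (v : Fin k → ℕ)
    (i : Fin k) (b : ℕ) :
    ∑ j : Fin k, c j (Function.update v i b j) = c i b + ∑ j ∈ Finset.univ \ {i}, c j (v j) := by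
  rw [comp_update]
  exact Finset.sum_update_of_mem (Finset.mem_univ i) (fun j => c j (v j)) (c i b)

lemma sum_comp_self {M : Type*} [AddCommMonoid M] (c : Fin k → ℕ → M) (v : Fin k → ℕ)
    (i : Fin k) :
    ∑ j : Fin k, c j (v j) = c i (v i) + ∑ j ∈ Finset.univ \ {i}, c j (v j) := by
  have := sum_comp_update k c v i (v i)
  simpa [Function.update_eq_self] using this

lemma W_update_succ (v : Fin k → ℕ) (i : Fin k) :
    W k (Function.update v i (v i + 1)) = W k v + ((i : ℕ) + 1) := by
  unfold W
  rw [sum_comp_update k (fun j x => ((j:ℕ)+1) * x), sum_comp_self k (fun j x => ((j:ℕ)+1) * x) v i]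
  ring

lemma key_T (w : Fin k → ℕ) (i : Fin k) :
    ((w i : ℝ) + 1) * T k lam (Function.update w i (w i + 1)) = lam * T k lam w := by
  unfold T
  have hs : (∑ j : Fin k, Function.update w i (w i + 1) j) = (∑ j : Fin k, w j) + 1 := by
    rw [sum_comp_update k (fun _ x => x), sum_comp_self k (fun _ x => x) w i]
    ring
  have hp : (∏ j : Fin k, Nat.factorial (Function.update w i (w i + 1) j))
      = (w i + 1) * ∏ j : Fin k, Nat.factorial (w j) := by
    have h1 : (fun j => Nat.factorial (Function.update w i (w i + 1) j))
        = Function.update (fun j => Nat.factorial (w j)) i (Nat.factorial (w i + 1)) :=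
      comp_update k (fun j x => Nat.factorial x) w i (w i + 1)
    rw [h1, Finset.prod_update_of_mem (Finset.mem_univ i),
      Finset.prod_eq_prod_diff_singleton_mul (Finset.mem_univ i) (fun j => Nat.factorial (w j)),
      Nat.factorial_succ]
    ring
  rw [hs, hp]
  have hpos : (0:ℝ) < (∏ j : Fin k, Nat.factorial (w j) : ℕ) := by
    positivity
  push_cast
  rw [pow_succ]
  field_simp

lemma per_i (n : ℕ) (i : Fin k) (hin : (i : ℕ) + 1 ≤ n) :
    ∑ v ∈ P k n, (v i : ℝ) * T k lam v = lam * F k lam (n - ((i : ℕ) + 1)) := by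
  classical
  have hsplit : ∑ v ∈ P k n, (v i : ℝ) * T k lam v
      = ∑ v ∈ (P k n).filter (fun v => v i ≠ 0), (v i : ℝ) * T k lam v := by
    rw [Finset.sum_filter_of_ne]
    intro v _ hne h0
    apply hne
    rw [h0]
    simp
  rw [hsplit, F, Finset.mul_sum]
  have hvback : ∀ v : Fin k → ℕ, v i ≠ 0 →
      Function.update (Function.update v i (v i - 1)) i (Function.update v i (v i - 1) i + 1) = v := by
    intro v hvi
    simp only [Function.update_self, Function.update_idem]
    rw [Nat.sub_add_cancel (Nat.one_le_iff_ne_zero.mpr hvi), Function.update_eq_self]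
  refine (Finset.sum_nbij' (fun w => Function.update w i (w i + 1))
    (fun v => Function.update v i (v i - 1)) ?_ ?_ ?_ ?_ ?_).symm
  · -- w ∈ P (n-(i+1)) → update ∈ filter
    intro w hw
    have hW : W k w = n - ((i:ℕ)+1) := (mem_P k).mp hw
    refine Finset.mem_filter.mpr ⟨(mem_P k).mpr ?_, ?_⟩
    · rw [W_update_succ k w i, hW]; omega
    · simp
  · -- v ∈ filter → update v i (v i - 1) ∈ P (n-(i+1))
    intro v hv
    obtain ⟨hvP, hvi⟩ := Finset.mem_filter.mp hv
    have hW : W k v = n := (mem_P k).mp hvP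
    have h2 := W_update_succ k (Function.update v i (v i - 1)) i
    rw [hvback v hvi, hW] at h2
    show Function.update v i (v i - 1) ∈ P k (n - ((i:ℕ)+1))
    exact (mem_P k).mpr (by omega)
  · intro w _
    simp only [Function.update_self, Function.update_idem, Nat.add_sub_cancel,
      Function.update_eq_self]
  · intro v hv
    exact hvback v (Finset.mem_filter.mp hv).2
  · intro w _
    have hkey := key_T k lam w i
    simp only [Function.update_self] at *
    push_cast at hkey ⊢
    linarith [hkey]

lemma per_i_zero (n : ℕ) (i : Fin k) (hin : n < (i : ℕ) + 1) :
    ∑ v ∈ P k n, (v i : ℝ) * T k lam v = 0 := by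
  apply Finset.sum_eq_zero
  intro v hv
  have hW : W k v = n := (mem_P k).mp hv
  have hle : ((i:ℕ)+1) * v i ≤ n := by
    rw [← hW]
    exact Finset.single_le_sum (f := fun j : Fin k => ((j:ℕ)+1) * v j)
      (fun j _ => Nat.zero_le _) (Finset.mem_univ i)
  have : v i = 0 := by nlinarith
  rw [this]
  simp

lemma main_id (n : ℕ) :
    (n : ℝ) * F k lam n
      = ∑ i : Fin k, (if (i : ℕ) + 1 ≤ n then ((i:ℕ)+1 : ℝ) * (lam * F k lam (n - ((i:ℕ)+1))) else 0) := by
  classical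
  have h1 : (n : ℝ) * F k lam n = ∑ v ∈ P k n, ∑ i : Fin k, (((i:ℕ)+1 : ℝ) * (v i : ℝ)) * T k lam v := by
    rw [F, Finset.mul_sum]
    refine Finset.sum_congr rfl fun v hv => ?_
    have hW : W k v = n := (mem_P k).mp hv
    rw [← hW]
    rw [← Finset.sum_mul]
    congr 1
    unfold W
    push_cast
    rfl
  rw [h1, Finset.sum_comm]
  refine Finset.sum_congr rfl fun i _ => ?_
  by_cases hin : (i : ℕ) + 1 ≤ n
  · rw [if_pos hin, ← per_i k lam n i hin, Finset.mul_sum]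
    refine Finset.sum_congr rfl fun v _ => by ring
  · rw [if_neg hin]
    have := per_i_zero k lam n i (by omega)
    calc ∑ v ∈ P k n, (((i:ℕ)+1 : ℝ) * (v i : ℝ)) * T k lam v
        = ((i:ℕ)+1 : ℝ) * ∑ v ∈ P k n, (v i : ℝ) * T k lam v := by
          rw [Finset.mul_sum]; exact Finset.sum_congr rfl fun v _ => by ring
      _ = 0 := by rw [this, mul_zero]

lemma F_zero : F k lam 0 = 1 := by
  have hP : P k 0 = {fun _ => 0} := by
    ext v
    rw [mem_P, Finset.mem_singleton]
    constructor
    · intro h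
      funext i
      have hle : ((i:ℕ)+1) * v i ≤ 0 := by
        rw [← h]
        exact Finset.single_le_sum (f := fun j : Fin k => ((j:ℕ)+1) * v j)
          (fun j _ => Nat.zero_le _) (Finset.mem_univ i)
      exact (Nat.mul_eq_zero.mp (Nat.le_zero.mp hle)).resolve_left (by omega)
    · intro h
      rw [h]
      unfold W
      simp
  rw [F, hP, Finset.sum_singleton]
  unfold T
  simp

end PoisAux

/-- For every integer k ≥ 1, real λ > 0 and integer n ≥ 1, the pmf of the
Poisson distribution of order k satisfies n·f_k(n;λ) = λ Σ_{j=1}^{k} j·f_k(n−j;λ),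
where f_k(m;λ) = 0 for m < 0, with initial value f_k(0;λ) = e^{−kλ}. -/
theorem poissonOrderK_recurrence (k : ℕ) (hk : 1 ≤ k) (lam : ℝ) (hlam : 0 < lam)
    (f : ℤ → ℝ)
    (hf : ∀ m : ℤ, f m = if 0 ≤ m then poissonOrderKPmf k lam m.toNat else 0) :
    poissonOrderKPmf k lam 0 = Real.exp (-(k * lam)) ∧
    ∀ n : ℕ, 1 ≤ n →
      (n : ℝ) * f n = lam * ∑ j ∈ Finset.Icc 1 k, (j : ℝ) * f ((n : ℤ) - (j : ℤ)) := by
  constructor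
  · rw [PoisAux.pmf_eq, PoisAux.F_zero, mul_one]
  · intro n hn
    have hfn : f n = Real.exp (-(k * lam)) * PoisAux.F k lam n := by
      rw [hf, if_pos (by positivity), Int.toNat_natCast, PoisAux.pmf_eq]
    have hterm : ∀ j ∈ Finset.Icc 1 k,
        (j : ℝ) * f ((n : ℤ) - (j : ℤ))
          = if j ≤ n then (j : ℝ) * (Real.exp (-(k * lam)) * PoisAux.F k lam (n - j)) else 0 := by
      intro j hj
      by_cases hjn : j ≤ n
      · rw [if_pos hjn, hf, if_pos (by omega)]
        have h3 : ((n : ℤ) - (j : ℤ)).toNat = n - j := by omega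
        rw [h3, PoisAux.pmf_eq]
      · rw [if_neg hjn, hf, if_neg (by omega), mul_zero]
    rw [Finset.sum_congr rfl hterm, hfn]
    have hmain := PoisAux.main_id k lam n
    have hreindex : ∑ i : Fin k, (if (i : ℕ) + 1 ≤ n then ((i:ℕ)+1 : ℝ) * (lam * PoisAux.F k lam (n - ((i:ℕ)+1))) else 0)
        = ∑ j ∈ Finset.Icc 1 k, (if j ≤ n then (j : ℝ) * (lam * PoisAux.F k lam (n - j)) else 0) := by
      rw [Fin.sum_univ_eq_sum_range (fun i => if i + 1 ≤ n then ((i:ℕ)+1 : ℝ) * (lam * PoisAux.F k lam (n - (i+1))) else 0) k]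
      rw [show Finset.Icc 1 k = Finset.Ico 1 (k+1) by rw [Finset.Ico_add_one_right_eq_Icc]]
      rw [Finset.sum_Ico_eq_sum_range]
      simp only [Nat.add_sub_cancel]
      refine Finset.sum_congr rfl fun i _ => ?_
      rw [add_comm 1 i]
      norm_cast
    calc (n : ℝ) * (Real.exp (-(k * lam)) * PoisAux.F k lam n)
        = Real.exp (-(k * lam)) * ((n : ℝ) * PoisAux.F k lam n) := by ring
      _ = Real.exp (-(k * lam)) *
            ∑ j ∈ Finset.Icc 1 k, (if j ≤ n then (j : ℝ) * (lam * PoisAux.F k lam (n - j)) else 0) := by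
          rw [hmain, hreindex]
      _ = lam * ∑ j ∈ Finset.Icc 1 k,
            (if j ≤ n then (j : ℝ) * (Real.exp (-(k * lam)) * PoisAux.F k lam (n - j)) else 0) := by
          rw [Finset.mul_sum, Finset.mul_sum]
          refine Finset.sum_congr rfl fun j _ => ?_
          by_cases hjn : j ≤ n
          · rw [if_pos hjn, if_pos hjn]; ring
          · rw [if_neg hjn, if_neg hjn, mul_zero, mul_zero]
end
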